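/- arXiv:math/0701876 — 3 statements merged into one kernel-verified Lean document; each statement's English description precedes it below -/
import Mathlib

section
/- Double re-expansion consistency: let f = Σ γ_n x^n have radius of convergence R > 0, let |a| < R and let |b - a| be less than the radius of convergence of the expansion of f around a, with |b| < R. Then for every m, Σ_{j ≥ m} (Σ_{n ≥ j} γ_n C(n,j) a^(n-j)) · C(j,m) · (b-a)^(j-m) = Σ_{n ≥ m} γ_n C(n,m) b^(n-m), i.e., expanding f around a and then around b gives the same result as expanding f directly around b. -/
/-!
Inside a disc of absolute convergence, re-expanding `∑ c n * (w + y) ^ n` in powers of `y` is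
Fubini plus the binomial theorem. This cannot be applied to both re-expansions at once, since
`‖a‖ + ‖b - a‖` may exceed `R`. Instead, `f z = ∑ γ n * z ^ n` and its re-expansion
`g z = ∑ c j * (z - a) ^ j` around `a` agree near `a`, hence, by the identity theorem, on the
convex set `ball 0 r ∩ ball a s`, which contains `b`. Both sides of the identity are then
coefficients of power series of the same function at `b`, so they coincide.
-/

open Filter Set Metric Topology FormalMultilinearSeries

theorem hasSum_choose_mul_pow_mul_pow {R : Type*} [CommSemiring R] [TopologicalSpace R]
    (u v : R) (n : ℕ) :
    HasSum (fun m => (n.choose m : R) * u ^ (n - m) * v ^ m) ((u + v) ^ n) := by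
  have hsupp : ∀ m ∉ Finset.range (n + 1), (n.choose m : R) * u ^ (n - m) * v ^ m = 0 :=
    fun m hm => by simp [Nat.choose_eq_zero_of_lt (by simpa using hm : n < m)]
  have hbinom :
      (u + v) ^ n = ∑ m ∈ Finset.range (n + 1), (n.choose m : R) * u ^ (n - m) * v ^ m := by
    rw [add_comm u v, add_pow]
    exact Finset.sum_congr rfl fun m _ => by ring
  rw [hbinom]
  exact hasSum_sum_of_ne_finset_zero hsupp

theorem summable_mul_choose_mul_pow_mul_pow {d : ℕ → ℝ} (hd : ∀ n, 0 ≤ d n) {u v : ℝ}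
    (hu : 0 ≤ u) (hv : 0 ≤ v) (hs : Summable fun n => d n * (u + v) ^ n) :
    Summable fun p : ℕ × ℕ => d p.1 * (p.1.choose p.2 * u ^ (p.1 - p.2) * v ^ p.2) := by
  have hrow (n : ℕ) := (hasSum_choose_mul_pow_mul_pow u v n).mul_left (d n)
  refine (summable_prod_of_nonneg fun p => ?_).2 ⟨fun n => (hrow n).summable, ?_⟩
  · have := hd p.1
    positivity
  · exact hs.congr fun n => (hrow n).tsum_eq.symm

variable {𝕜 : Type*} [RCLike 𝕜]

/-- The `m`-th coefficient of `∑ n, c n * (w + y) ^ n` as a power series in `y`. -/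
noncomputable def reexpandCoeff (c : ℕ → 𝕜) (w : 𝕜) (m : ℕ) : 𝕜 :=
  ∑' n, c n * (n.choose m : 𝕜) * w ^ (n - m)

theorem hasSum_reexpandCoeff_mul_pow {c : ℕ → 𝕜} {w y : 𝕜}
    (hc : Summable fun n => ‖c n‖ * (‖w‖ + ‖y‖) ^ n) :
    HasSum (fun m => reexpandCoeff c w m * y ^ m) (∑' n, c n * (w + y) ^ n) := by
  set F : ℕ × ℕ → 𝕜 := fun p => c p.1 * (p.1.choose p.2 * w ^ (p.1 - p.2) * y ^ p.2)
  have hF : Summable F := by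
    refine Summable.of_norm <| (summable_mul_choose_mul_pow_mul_pow (fun n => norm_nonneg (c n))
      (norm_nonneg w) (norm_nonneg y) hc).congr fun p => ?_
    simp [F, norm_mul, norm_pow]
  have hrow (n : ℕ) : HasSum (fun m => F (n, m)) (c n * (w + y) ^ n) :=
    (hasSum_choose_mul_pow_mul_pow w y n).mul_left (c n)
  have hcol (m : ℕ) : HasSum (fun n => F (n, m)) (reexpandCoeff c w m * y ^ m) := by
    have hF_eq : (fun n => F (n, m)) = fun n => c n * n.choose m * w ^ (n - m) * y ^ m := by
      funext n
      ring
    rw [reexpandCoeff, ← tsum_mul_right, ← hF_eq]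
    exact (hF.comp_injective (Prod.mk_left_injective m)).hasSum
  have hsum : ∑' p, F p = ∑' n, c n * (w + y) ^ n :=
    (hF.hasSum.prod_fiberwise hrow).tsum_eq.symm
  rw [← hsum]
  exact ((Equiv.prodComm ℕ ℕ).hasSum_iff.2 hF.hasSum).prod_fiberwise hcol

theorem hasFPowerSeriesOnBall_ofScalars_of_hasSum {f : 𝕜 → 𝕜} {A : ℕ → 𝕜} {x : 𝕜}
    {r : ℝ} (hr : 0 < r)
    (hf : ∀ y : 𝕜, ‖y‖ < r → HasSum (fun m => A m * y ^ m) (f (x + y))) :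
    HasFPowerSeriesOnBall f (ofScalars 𝕜 A) x (ENNReal.ofReal r) where
  r_le := by
    refine ENNReal.le_of_forall_nnreal_lt fun t ht => ?_
    have ht' : (t : ℝ) < r := by
      simpa using (ENNReal.lt_ofReal_iff_toReal_lt ENNReal.coe_ne_top).1 ht
    refine le_radius_of_tendsto _ (l := 0) ?_
    convert ((hf (t : ℝ) (by simpa using ht')).summable.tendsto_atTop_zero).norm using 2 with n
    · simp [norm_mul, norm_pow]
    · simp
  r_pos := ENNReal.ofReal_pos.2 hr
  hasSum {y} hy := by
    have hy' : ‖y‖ < r := by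
      rw [Metric.mem_eball, edist_zero_right, ← ofReal_norm] at hy
      exact (ENNReal.ofReal_lt_ofReal_iff hr).1 hy
    simpa [ofScalars_apply_eq, mul_comm] using hf y hy'

theorem hasFPowerSeriesOnBall_reexpandCoeff {c : ℕ → 𝕜} {s : ℝ}
    (hs : Summable fun n => ‖c n‖ * s ^ n) {w : 𝕜} (hw : ‖w‖ < s) :
    HasFPowerSeriesOnBall (fun z => ∑' n, c n * z ^ n) (ofScalars 𝕜 (reexpandCoeff c w)) w
      (ENNReal.ofReal (s - ‖w‖)) :=
  hasFPowerSeriesOnBall_ofScalars_of_hasSum (sub_pos.2 hw) fun y hy =>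
    hasSum_reexpandCoeff_mul_pow <| hs.of_nonneg_of_le (fun n => by positivity) fun n => by
      gcongr
      linarith

theorem analyticOnNhd_tsum_mul_pow {c : ℕ → 𝕜} {s : ℝ}
    (hs : Summable fun n => ‖c n‖ * s ^ n) :
    AnalyticOnNhd 𝕜 (fun z => ∑' n, c n * z ^ n) (ball 0 s) := fun _ hx =>
  (hasFPowerSeriesOnBall_reexpandCoeff hs (mem_ball_zero_iff.1 hx)).analyticAt

theorem reexpandCoeff_reexpandCoeff {c : ℕ → 𝕜} {r s : ℝ} {a b : 𝕜}
    (hr : Summable fun n => ‖c n‖ * r ^ n) (ha : ‖a‖ < r) (hb : ‖b‖ < r)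
    (hs : Summable fun j => ‖reexpandCoeff c a j‖ * s ^ j) (hab : ‖b - a‖ < s) :
    reexpandCoeff (reexpandCoeff c a) (b - a) = reexpandCoeff c b := by
  set f := fun z : 𝕜 => ∑' n, c n * z ^ n
  set g := fun z : 𝕜 => ∑' j, reexpandCoeff c a j * (z - a) ^ j
  have hfg_a : f =ᶠ[𝓝 a] g :=
    (hasFPowerSeriesOnBall_reexpandCoeff hr ha).eventually_hasSum_sub.mono fun z hz => by
      simpa [g, ofScalars_apply_eq, mul_comm] using hz.tsum_eq.symm
  have hf_an : AnalyticOnNhd 𝕜 f (ball 0 r) := analyticOnNhd_tsum_mul_pow hr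
  have hg_an : AnalyticOnNhd 𝕜 g (ball a s) := fun x hx => by
    have hx' : ‖x - a‖ < s := by rwa [mem_ball, dist_eq_norm] at hx
    simpa using ((hasFPowerSeriesOnBall_reexpandCoeff hs hx').comp_sub a).analyticAt
  have hfg : EqOn f g (ball 0 r ∩ ball a s) :=
    (hf_an.mono inter_subset_left).eqOn_of_preconnected_of_eventuallyEq
      (hg_an.mono inter_subset_right) ((convex_ball _ _).inter (convex_ball _ _)).isPreconnected
      ⟨mem_ball_zero_iff.2 ha, mem_ball_self ((norm_nonneg _).trans_lt hab)⟩ hfg_a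
  have hfg_b : f =ᶠ[𝓝 b] g := by
    refine eventuallyEq_of_mem (isOpen_ball.inter isOpen_ball |>.mem_nhds ?_) hfg
    exact ⟨mem_ball_zero_iff.2 hb, by rwa [mem_ball, dist_eq_norm]⟩
  have hg_b :
      HasFPowerSeriesAt g (ofScalars 𝕜 (reexpandCoeff (reexpandCoeff c a) (b - a))) b := by
    simpa using ((hasFPowerSeriesOnBall_reexpandCoeff hs hab).comp_sub a).hasFPowerSeriesAt
  exact ofScalars_series_injective 𝕜 𝕜 <| hg_b.eq_formalMultilinearSeries_of_eventually
    (hasFPowerSeriesOnBall_reexpandCoeff hr hb).hasFPowerSeriesAt hfg_b.symm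

theorem double_reexpansion_general (γ : ℕ → ℂ) (R : ℝ)
    (hconv : ∀ s : ℝ, 0 ≤ s → s < R → Summable (fun n => ‖γ n‖ * s ^ n))
    (a b : ℂ) (ha : ‖a‖ < R) (hb : ‖b‖ < R)
    (hba : ∃ s : ℝ, ‖b - a‖ < s ∧
      Summable (fun j => ‖∑' n : ℕ, γ n * (n.choose j : ℂ) * a ^ (n - j)‖ * s ^ j)) :
    ∀ m : ℕ,
      ∑' j : ℕ, (∑' n : ℕ, γ n * (n.choose j : ℂ) * a ^ (n - j)) *
          (j.choose m : ℂ) * (b - a) ^ (j - m)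
        = ∑' n : ℕ, γ n * (n.choose m : ℂ) * b ^ (n - m) := by
  obtain ⟨s, hab, hs⟩ := hba
  obtain ⟨r, hr, hrR⟩ := exists_between (max_lt ha hb)
  have hr0 : 0 ≤ r := (norm_nonneg a).trans ((le_max_left _ _).trans hr.le)
  have hcoeff := reexpandCoeff_reexpandCoeff (hconv r hr0 hrR) ((le_max_left _ _).trans_lt hr)
    ((le_max_right _ _).trans_lt hr) hs hab
  exact fun m => congrFun hcoeff m

theorem double_reexpansion (γ : ℕ → ℂ) (R : ℝ) (hR : 0 < R)
    (hconv : ∀ s : ℝ, 0 ≤ s → s < R → Summable (fun n => ‖γ n‖ * s ^ n))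
    (a b : ℂ) (ha : ‖a‖ < R) (hb : ‖b‖ < R)
    (hba : ∃ s : ℝ, ‖b - a‖ < s ∧
      Summable (fun j => ‖∑' n : ℕ, γ n * (n.choose j : ℂ) * a ^ (n - j)‖ * s ^ j)) :
    ∀ m : ℕ,
      ∑' j : ℕ, (∑' n : ℕ, γ n * (n.choose j : ℂ) * a ^ (n - j)) *
          (j.choose m : ℂ) * (b - a) ^ (j - m)
        = ∑' n : ℕ, γ n * (n.choose m : ℂ) * b ^ (n - m) :=
  double_reexpansion_general γ R hconv a b ha hb hba
end

section
/- Fix a real r > 1. The series f(s) = Σ_{n=1}^∞ n^{-r} n^{-s} = Σ_{n=1}^∞ n^{-r} Σ_{d=0}^∞ (-log n)^d s^d / d!, rearranged as a power series in s, has radius of convergence at least r - 1: that is, for every 0 ≤ ρ < r - 1, Σ_{d=0}^∞ (Σ_{n=1}^∞ n^{-r} (log n)^d / d!) ρ^d < ∞. -/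
theorem zeta_expansion_radius (r : ℝ) (hr : 1 < r) (ρ : ℝ) (hρ0 : 0 ≤ ρ) (hρ : ρ < r - 1) :
    Summable (fun d : ℕ =>
      (∑' n : ℕ, (Real.log (n + 1)) ^ d / ((n + 1 : ℝ) ^ r * d.factorial)) * ρ ^ d) := by
  -- G (n, d)
  set G : ℕ × ℕ → ℝ := fun p =>
    (ρ * Real.log (p.1 + 1)) ^ p.2 / p.2.factorial * ((p.1 + 1 : ℝ) ^ r)⁻¹ with hG
  have hpos : ∀ n : ℕ, (0:ℝ) < (n + 1 : ℝ) ^ r := fun n =>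
    Real.rpow_pos_of_pos (by positivity) r
  have hlog : ∀ n : ℕ, 0 ≤ Real.log (n + 1) := fun n =>
    Real.log_nonneg (by push_cast; linarith [Nat.cast_nonneg (α := ℝ) n])
  have hG0 : ∀ p, 0 ≤ G p := by
    intro p
    have := hlog p.1
    have := (hpos p.1).le
    have h1 : 0 ≤ ρ * Real.log (p.1 + 1) := mul_nonneg hρ0 (hlog p.1)
    positivity
  -- fiberwise sum of G over d
  have hfib : ∀ n : ℕ, HasSum (fun d => G (n, d)) ((n + 1 : ℝ) ^ (ρ - r)) := by
    intro n
    have hs : HasSum (fun d : ℕ => (ρ * Real.log (n + 1)) ^ d / d.factorial)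
        (Real.exp (ρ * Real.log (n + 1))) := by
      rw [Real.exp_eq_exp_ℝ, NormedSpace.exp_eq_tsum_div]
      exact (Real.summable_pow_div_factorial (ρ * Real.log (n + 1))).hasSum
    have h2 := hs.mul_right ((n + 1 : ℝ) ^ r)⁻¹
    have hnpos : (0:ℝ) < (n:ℝ) + 1 := by positivity
    have hval : Real.exp (ρ * Real.log (n + 1)) * ((n + 1 : ℝ) ^ r)⁻¹
        = (n + 1 : ℝ) ^ (ρ - r) := by
      rw [mul_comm ρ, Real.exp_mul, Real.exp_log hnpos,
        ← Real.rpow_neg hnpos.le, ← Real.rpow_add hnpos, sub_eq_add_neg]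
    rw [hval] at h2
    exact h2
  have hsum_out : Summable (fun n : ℕ => ((n:ℝ) + 1) ^ (ρ - r)) := by
    have h1 : Summable (fun n : ℕ => ((n+1:ℕ):ℝ) ^ (ρ - r)) := by
      have := (Real.summable_nat_rpow (p := ρ - r)).2 (by linarith)
      exact (summable_nat_add_iff 1).2 this
    simpa using h1
  have hGsum : Summable G := by
    rw [summable_prod_of_nonneg hG0]
    refine ⟨fun n => (hfib n).summable, ?_⟩
    convert hsum_out using 2 with n
    exact (hfib n).tsum_eq
  -- swap
  have hGswap : Summable (fun p : ℕ × ℕ => G p.swap) := hGsum.prod_symm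
  have key : Summable (fun p : ℕ × ℕ =>
      (Real.log (p.2 + 1)) ^ p.1 / ((p.2 + 1 : ℝ) ^ r * p.1.factorial) * ρ ^ p.1) := by
    refine hGswap.congr fun p => ?_
    obtain ⟨d, n⟩ := p
    simp only [hG, Prod.swap]
    rw [mul_pow]
    have := (hpos n).ne'
    field_simp
  have := ((summable_prod_of_nonneg (f := fun p : ℕ × ℕ =>
      (Real.log (p.2 + 1)) ^ p.1 / ((p.2 + 1 : ℝ) ^ r * p.1.factorial) * ρ ^ p.1) ?_).1 key).2
  · refine this.congr fun d => ?_
    exact tsum_mul_right (f := fun n : ℕ => Real.log (n + 1) ^ d / ((n + 1 : ℝ) ^ r * d.factorial)) (a := ρ ^ d)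
  · intro p
    have := hlog p.2
    have := (hpos p.2).le
    have h1 := pow_nonneg hρ0 p.1
    positivity
end

section
/- Functional equation characterizing the exponential in two variables: in the ring ℂ[[λ, x]], if f = Σ f_n (graded by total degree) satisfies f = 1 + λ + x + (higher order terms) and f(λ, x)^k = f(kλ, kx) for a fixed integer k ≥ 2, then f is uniquely determined; moreover e^λ · E(x) satisfies these conditions whenever E ∈ ℂ[[x]] satisfies E(x)^k = E(kx) and E = 1 + x + O(x²). In particular, in the commutative setting, E(λ + x) = e^λ E(x). -/
/-!
Write `f(kλ, kx)` as `rescale k f`. If `f ≠ g` both satisfy `f ^ k = rescale k f` and agree in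
degrees `≤ 1`, pick a monomial `d` of least degree `n ≥ 2` at which they differ. Since
`f ^ k - g ^ k = (f - g) · ∑ fⁱ gᵏ⁻¹⁻ⁱ` and the sum has constant term `k`, the coefficient of `d`
gives `k · c = kⁿ · c` with `c ≠ 0`, which is impossible. Substituting a linear form into a
one-variable series commutes with `rescale`, so `e^λ E(x)` and `E(λ + x)` both satisfy the
conditions, and uniqueness identifies them.
-/

open MvPowerSeries

/-- Substituting `(kλ, kx)` for `(λ, x)` in a two-variable power series:
the coefficient of a monomial of total degree `n` gets multiplied by `k^n`. -/
noncomputable def scaleVars (k : ℕ) (f : MvPowerSeries (Fin 2) ℂ) :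
    MvPowerSeries (Fin 2) ℂ :=
  fun d => (k : ℂ) ^ (d 0 + d 1) * MvPowerSeries.coeff d f

/-- `f = 1 + λ + x + (higher order)` and `f(λ,x)^k = f(kλ, kx)`. -/
def ExpLike (k : ℕ) (f : MvPowerSeries (Fin 2) ℂ) : Prop :=
  MvPowerSeries.coeff 0 f = 1 ∧
  MvPowerSeries.coeff (Finsupp.single 0 1) f = 1 ∧
  MvPowerSeries.coeff (Finsupp.single 1 1) f = 1 ∧
  f ^ k = scaleVars k f

theorem natCast_pow_ne_self {R : Type*} [Semiring R] [CharZero R] {k n : ℕ} (hk : 2 ≤ k)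
    (hn : 2 ≤ n) : (k : R) ^ n ≠ k := by
  have hlt : k ^ 1 < k ^ n := Nat.pow_lt_pow_right (by omega) (by omega)
  exact_mod_cast (pow_one k ▸ hlt).ne'

namespace MvPowerSeries

variable {σ R : Type*}

theorem coeff_rescale_const [CommSemiring R] (a : R) (f : MvPowerSeries σ R) (d : σ →₀ ℕ) :
    coeff d (rescale (Function.const σ a) f) = a ^ d.degree * coeff d f := by
  simp only [coeff_rescale, Finsupp.prod, Function.const_apply, Finset.prod_pow_eq_pow_sum,
    Finsupp.degree_apply]

theorem coeff_mul_of_degree_le_order [CommRing R] {f : MvPowerSeries σ R} {d : σ →₀ ℕ}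
    (hd : d.degree ≤ f.order) (g : MvPowerSeries σ R) :
    coeff d (f * g) = coeff d f * constantCoeff g := by
  have hg : 1 ≤ (g - C (constantCoeff g)).order := by
    rw [Order.one_le_iff_ne_zero, order_ne_zero_iff_constCoeff_eq_zero]
    simp
  have hlt : (d.degree : ℕ∞) < (f * (g - C (constantCoeff g))).order :=
    calc (d.degree : ℕ∞) < f.order + 1 := ENat.natCast_lt_add_one_iff.mpr hd
      _ ≤ f.order + (g - C (constantCoeff g)).order := by gcongr
      _ ≤ _ := le_order_mul
  rw [← coeff_mul_C, ← sub_eq_zero, ← map_sub, ← mul_sub, coeff_of_lt_order hlt]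

theorem degree_eq_one_of_mem_support_X [CommSemiring R] (i : σ) :
    ∀ d ∈ Function.support (X i : MvPowerSeries σ R), d.degree = 1 := by
  classical
  intro d hd
  have hcoeff : coeff d (X i : MvPowerSeries σ R) ≠ 0 := hd
  rw [coeff_X] at hcoeff
  simp [(ite_ne_right_iff.mp hcoeff).1]

theorem eq_of_pow_eq_rescale [CommRing R] [IsDomain R] [CharZero R] {k : ℕ} (hk : 2 ≤ k)
    {f g : MvPowerSeries σ R} (hf : f ^ k = rescale (Function.const σ (k : R)) f)
    (hg : g ^ k = rescale (Function.const σ (k : R)) g) (hf0 : constantCoeff f = 1)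
    (hfg : ∀ d : σ →₀ ℕ, d.degree ≤ 1 → coeff d f = coeff d g) : f = g := by
  have hg0 : constantCoeff g = 1 := by
    simpa [hf0] using (hfg 0 (by simp)).symm
  by_contra hne
  have hsub : f - g ≠ 0 := sub_ne_zero.mpr hne
  obtain ⟨d, hd, hdeg⟩ := exists_coeff_ne_zero_and_order (ne_zero_iff_order_finite.mp hsub)
  have hdeg_two : 2 ≤ d.degree := by
    have horder : ((2 : ℕ) : ℕ∞) ≤ (f - g).order := nat_le_order fun e he => by
      rw [map_sub, sub_eq_zero]; exact hfg e (by omega)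
    exact_mod_cast hdeg ▸ horder
  have hq : constantCoeff (∑ i ∈ Finset.range k, f ^ i * g ^ (k - 1 - i)) = k := by
    simp [hf0, hg0]
  have hscale : coeff d (f - g) * k = (k : R) ^ d.degree * coeff d (f - g) :=
    calc coeff d (f - g) * k
        = coeff d ((f - g) * ∑ i ∈ Finset.range k, f ^ i * g ^ (k - 1 - i)) := by
          rw [coeff_mul_of_degree_le_order hdeg.le, hq]
      _ = coeff d (f ^ k - g ^ k) := by rw [mul_comm, geom_sum₂_mul]
      _ = (k : R) ^ d.degree * coeff d (f - g) := by
          rw [hf, hg, ← map_sub, coeff_rescale_const]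
  apply natCast_pow_ne_self (R := R) hk hdeg_two
  exact (mul_right_cancel₀ hd (by rw [← hscale, mul_comm])).symm

end MvPowerSeries

theorem Finsupp.degree_fin_two (d : Fin 2 →₀ ℕ) : d.degree = d 0 + d 1 := by
  rw [Finsupp.degree_eq_sum, Fin.sum_univ_two]

theorem Finsupp.fin_two_eq_zero_or_single_of_degree_le_one {d : Fin 2 →₀ ℕ} (hd : d.degree ≤ 1) :
    d = 0 ∨ d = Finsupp.single 0 1 ∨ d = Finsupp.single 1 1 := by
  rw [Finsupp.degree_fin_two] at hd
  have h : ∀ e : Fin 2 →₀ ℕ, e 0 = d 0 → e 1 = d 1 → d = e := fun e h0 h1 => by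
    ext i; fin_cases i <;> simp [h0, h1]
  obtain ⟨h0, h1⟩ | ⟨h0, h1⟩ | ⟨h0, h1⟩ :
      (d 0 = 0 ∧ d 1 = 0) ∨ (d 0 = 1 ∧ d 1 = 0) ∨ (d 0 = 0 ∧ d 1 = 1) := by omega
  · exact .inl (h _ (by simp [h0]) (by simp [h1]))
  · exact .inr (.inl (h _ (by simp [h0]) (by simp [h1])))
  · exact .inr (.inr (h _ (by simp [h0]) (by simp [h1])))

theorem scaleVars_eq_rescale (k : ℕ) (f : MvPowerSeries (Fin 2) ℂ) :
    scaleVars k f = rescale (Function.const (Fin 2) (k : ℂ)) f := by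
  ext d
  rw [MvPowerSeries.coeff_rescale_const, Finsupp.degree_fin_two]
  rfl

theorem ExpLike.eq {k : ℕ} (hk : 2 ≤ k) {f g : MvPowerSeries (Fin 2) ℂ} (hf : ExpLike k f)
    (hg : ExpLike k g) : f = g := by
  obtain ⟨hf1, hfl, hfx, hfk⟩ := hf
  obtain ⟨hg1, hgl, hgx, hgk⟩ := hg
  rw [scaleVars_eq_rescale] at hfk hgk
  refine eq_of_pow_eq_rescale hk hfk hgk (by rwa [← coeff_zero_eq_constantCoeff_apply]) ?_
  intro d hd
  obtain rfl | rfl | rfl := Finsupp.fin_two_eq_zero_or_single_of_degree_le_one hd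
  · rw [hf1, hg1]
  · rw [hfl, hgl]
  · rw [hfx, hgx]

namespace PowerSeries

theorem pow_subst_eq_rescale {σ R : Type*} [CommRing R] {k : ℕ} {A : PowerSeries R}
    (hA : A ^ k = rescale (k : R) A) {p : MvPowerSeries σ R}
    (hp : ∀ d ∈ Function.support p, d.degree = 1) :
    subst p A ^ k = MvPowerSeries.rescale (Function.const σ (k : R)) (subst p A) := by
  have hsubst : HasSubst p := HasSubst.of_constantCoeff_zero <| by
    by_contra h
    simpa using hp 0 h
  rw [← subst_pow hsubst, hA, subst_rescale_of_degree_eq_one _ _ hp]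

theorem coeff_subst_X_zero_mul_subst_X_one {R : Type*} [CommRing R] (A B : PowerSeries R)
    (e : Fin 2 →₀ ℕ) :
    MvPowerSeries.coeff e (subst (MvPowerSeries.X 0) A * subst (MvPowerSeries.X 1) B) =
      PowerSeries.coeff (e 0) A * PowerSeries.coeff (e 1) B := by
  have he : e = Finsupp.single 0 (e 0) + Finsupp.single 1 (e 1) := by
    ext i; fin_cases i <;> simp
  rw [MvPowerSeries.coeff_mul, Finset.sum_eq_single_of_mem
    (Finsupp.single 0 (e 0), Finsupp.single 1 (e 1))
    (Finset.HasAntidiagonal.mem_antidiagonal.mpr he.symm)]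
  · simp [coeff_subst_single]
  · rintro ⟨u, v⟩ huv hne
    rw [Finset.HasAntidiagonal.mem_antidiagonal] at huv
    by_contra h
    obtain ⟨hu, hv⟩ := ne_zero_and_ne_zero_of_mul h
    simp only [coeff_subst_single, ne_eq, ite_eq_right_iff, not_forall] at hu hv
    apply hne
    rw [← huv, hu.1, hv.1]
    simp

end PowerSeries

theorem expLike_subst_X_zero_mul_subst_X_one {k : ℕ} {A B : PowerSeries ℂ}
    (hA0 : PowerSeries.constantCoeff A = 1) (hA1 : PowerSeries.coeff 1 A = 1)
    (hAk : A ^ k = PowerSeries.rescale (k : ℂ) A)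
    (hB0 : PowerSeries.constantCoeff B = 1) (hB1 : PowerSeries.coeff 1 B = 1)
    (hBk : B ^ k = PowerSeries.rescale (k : ℂ) B) :
    ExpLike k (PowerSeries.subst (X 0) A * PowerSeries.subst (X 1) B) := by
  refine ⟨?_, ?_, ?_, ?_⟩
  · simp [PowerSeries.coeff_subst_X_zero_mul_subst_X_one, hA0, hB0]
  · simp [PowerSeries.coeff_subst_X_zero_mul_subst_X_one, hA1, hB0]
  · simp [PowerSeries.coeff_subst_X_zero_mul_subst_X_one, hA0, hB1]
  · rw [scaleVars_eq_rescale, map_mul, mul_pow,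
      PowerSeries.pow_subst_eq_rescale hAk (degree_eq_one_of_mem_support_X 0),
      PowerSeries.pow_subst_eq_rescale hBk (degree_eq_one_of_mem_support_X 1)]

theorem expLike_subst_X_zero_add_X_one {k : ℕ} {E : PowerSeries ℂ}
    (hE0 : PowerSeries.constantCoeff E = 1) (hE1 : PowerSeries.coeff 1 E = 1)
    (hEk : E ^ k = PowerSeries.rescale (k : ℂ) E) :
    ExpLike k (PowerSeries.subst (X 0 + X 1) E) := by
  refine ⟨?_, ?_, ?_, ?_⟩
  · simp [PowerSeries.coeff_subst_X_zero_add_X_one, hE0]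
  · simp [PowerSeries.coeff_subst_X_zero_add_X_one, hE1]
  · simp [PowerSeries.coeff_subst_X_zero_add_X_one, hE1]
  · rw [scaleVars_eq_rescale]
    refine PowerSeries.pow_subst_eq_rescale hEk fun d hd => ?_
    exact (Function.support_add _ _ hd).elim (degree_eq_one_of_mem_support_X 0 d)
      (degree_eq_one_of_mem_support_X 1 d)

theorem exp_two_var_characterization (k : ℕ) (hk : 2 ≤ k) :
    (∀ f g : MvPowerSeries (Fin 2) ℂ, ExpLike k f → ExpLike k g → f = g) ∧
    (∀ E : PowerSeries ℂ,
      PowerSeries.constantCoeff E = 1 →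
      PowerSeries.coeff 1 E = 1 →
      E ^ k = PowerSeries.rescale (k : ℂ) E →
      -- `e^λ · E(x)`, whose coefficient at `λ^m x^n` is `α_n / m!`, is ExpLike
      ExpLike k (fun d : Fin 2 →₀ ℕ =>
        (1 / (d 0).factorial : ℂ) * PowerSeries.coeff (d 1) E) ∧
      -- in particular `E(λ + x) = e^λ E(x)` coefficientwise:
      ∀ m n : ℕ, ((m + n).choose m : ℂ) * PowerSeries.coeff (m + n) E =
        PowerSeries.coeff n E / (m.factorial : ℂ)) := by
  refine ⟨fun f g hf hg => hf.eq hk hg, fun E hE0 hE1 hEk => ?_⟩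
  have hprod :
      ExpLike k (PowerSeries.subst (X 0) (PowerSeries.exp ℂ) * PowerSeries.subst (X 1) E) :=
    expLike_subst_X_zero_mul_subst_X_one PowerSeries.constantCoeff_exp
      (by simp [PowerSeries.coeff_exp]) (PowerSeries.exp_pow_eq_rescale_exp k) hE0 hE1 hEk
  have hcoeff : PowerSeries.subst (X 0) (PowerSeries.exp ℂ) * PowerSeries.subst (X 1) E =
      fun d : Fin 2 →₀ ℕ => (1 / (d 0).factorial : ℂ) * PowerSeries.coeff (d 1) E := by
    funext d
    refine (PowerSeries.coeff_subst_X_zero_mul_subst_X_one _ E d).trans ?_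
    simp [PowerSeries.coeff_exp]
  refine ⟨hcoeff ▸ hprod, fun m n => ?_⟩
  have hshift := (expLike_subst_X_zero_add_X_one hE0 hE1 hEk).eq hk hprod
  have hmn := congrArg (coeff (Finsupp.single 0 m + Finsupp.single 1 n)) hshift
  simpa [PowerSeries.coeff_subst_X_zero_add_X_one, PowerSeries.coeff_subst_X_zero_mul_subst_X_one,
    PowerSeries.coeff_exp, div_eq_inv_mul] using hmn
end
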